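/- arXiv:1807.01047 — 3 statements merged into one kernel-verified Lean document; each statement's English description precedes it below -/
import Mathlib

section
/- Let {|ψ_x^{(θ)}⟩ : x = 1,...,d} for θ = 1,...,d+1 be a complete set of d+1 mutually unbiased orthonormal bases of a d-dimensional Hilbert space H (meaning |⟨ψ_x^{(θ)}|ψ_y^{(θ')}⟩|² = 1/d whenever θ ≠ θ'). Then ∑_{θ=1}^{d+1} ∑_{x=1}^{d} |ψ_x^{(θ)}⟩⟨ψ_x^{(θ)}| ⊗ |ψ_x^{(θ)}⟩⟨ψ_x^{(θ)}| = I + F_swap, where I is the identity on H ⊗ H and F_swap is the swap operator. -/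
/-! Write `S = ∑ P ⊗ P` over the `d (d + 1)` projectors `P = |ψ⟩⟨ψ|` and `T = 1 + F`. Both are
Hermitian, so `S = T` as soon as `tr (S S) = tr (S T) = tr (T T)`, since `S - T` then has
Hilbert–Schmidt norm zero. All three traces equal `2 d (d + 1)`: `tr (T T) = 2 d² + 2 d`; since
`tr ((A ⊗ B) F) = tr (A B)`, each `P` contributes `(tr P)² + tr (P P) = 2` to `tr (S T)`; and
`tr (S S) = ∑ |⟨ψ, ψ'⟩|⁴`, where for fixed `ψ` the sum over `ψ'` is `1 + d · d · d⁻² = 2` by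
orthonormality and mutual unbiasedness. -/

open Matrix Kronecker BigOperators Complex

noncomputable section

/-- The swap operator on `ℂ^d ⊗ ℂ^d`, as a matrix: `F(u ⊗ v) = v ⊗ u`. -/
def swapM (d : ℕ) : Matrix (Fin d × Fin d) (Fin d × Fin d) ℂ :=
  fun p q => if p.1 = q.2 ∧ p.2 = q.1 then 1 else 0

/-- Rank-one projector `|ψ⟩⟨ψ|` as a matrix. -/
def proj {d : ℕ} (ψ : Fin d → ℂ) : Matrix (Fin d) (Fin d) ℂ :=
  Matrix.vecMulVec ψ (star ψ)

open scoped ComplexOrder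

lemma Matrix.IsHermitian.eq_of_trace_mul_self_eq_trace_mul {n R : Type*} [Fintype n]
    [CommRing R] [PartialOrder R] [StarRing R] [StarOrderedRing R] [NoZeroDivisors R]
    {A B : Matrix n n R} (hA : A.IsHermitian) (hB : B.IsHermitian)
    (hAA : trace (A * A) = trace (A * B)) (hBB : trace (B * B) = trace (A * B)) : A = B := by
  rw [← sub_eq_zero, ← trace_conjTranspose_mul_self_eq_zero_iff, (hA.sub hB).eq, sub_mul,
    mul_sub, mul_sub, trace_sub, trace_sub, trace_sub, trace_mul_comm B A, hAA, hBB]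
  abel

section Proj

variable {d : ℕ}

lemma isHermitian_proj (a : Fin d → ℂ) : (proj a).IsHermitian := by
  simp [IsHermitian, proj]

lemma trace_proj (a : Fin d → ℂ) : trace (proj a) = star a ⬝ᵥ a := by
  rw [proj, trace_vecMulVec, dotProduct_comm]

lemma trace_proj_mul_proj (a b : Fin d → ℂ) :
    trace (proj a * proj b) = ((‖star a ⬝ᵥ b‖ ^ 2 : ℝ) : ℂ) := by
  rw [proj, proj, vecMulVec_mul_vecMulVec, trace_vecMulVec, dotProduct_smul, smul_eq_mul,
    dotProduct_comm a (star b), star_dotProduct b a, Complex.star_def, Complex.mul_conj']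
  push_cast; rfl

lemma proj_mul_proj_self {a : Fin d → ℂ} (ha : star a ⬝ᵥ a = 1) : proj a * proj a = proj a := by
  rw [proj, vecMulVec_mul_vecMulVec, ha, one_smul]

end Proj

section Swap

variable {d : ℕ}

lemma isHermitian_swapM : (swapM d).IsHermitian := by
  ext p q
  simp [swapM, eq_comm, and_comm]

lemma swapM_mul_swapM : swapM d * swapM d = 1 := by
  ext p q
  simp [mul_apply, swapM, Fintype.sum_prod_type, ite_and, one_apply, Prod.ext_iff, eq_comm]

lemma trace_swapM : trace (swapM d) = d := by
  simp [trace, swapM, Fintype.sum_prod_type, ite_and]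

lemma trace_kronecker_mul_swapM (A B : Matrix (Fin d) (Fin d) ℂ) :
    trace (A ⊗ₖ B * swapM d) = trace (A * B) := by
  simp [trace, mul_apply, swapM, Fintype.sum_prod_type, kroneckerMap_apply, mul_ite, ite_and]

lemma trace_one_add_swapM_mul_self :
    trace ((1 + swapM d) * (1 + swapM d)) = (2 * d * (d + 1) : ℂ) := by
  rw [add_mul, one_mul, mul_add, mul_one, swapM_mul_swapM]
  simp only [trace_add, trace_one, trace_swapM, Fintype.card_prod, Fintype.card_fin]
  push_cast; ring

end Swap

section Frame

variable {d : ℕ} {ι : Type*} [Fintype ι]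

lemma isHermitian_sum_kronecker_proj (v : ι → Fin d → ℂ) :
    (∑ i, proj (v i) ⊗ₖ proj (v i)).IsHermitian := by
  simp only [IsHermitian, conjTranspose_sum, conjTranspose_kronecker, (isHermitian_proj _).eq]

lemma trace_sum_kronecker_proj_mul_self (v : ι → Fin d → ℂ) :
    trace ((∑ i, proj (v i) ⊗ₖ proj (v i)) * ∑ j, proj (v j) ⊗ₖ proj (v j)) =
      ((∑ i, ∑ j, ‖star (v i) ⬝ᵥ v j‖ ^ 4 : ℝ) : ℂ) := by
  simp only [Finset.sum_mul_sum, trace_sum, ← mul_kronecker_mul, trace_kronecker,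
    trace_proj_mul_proj]
  push_cast
  ring_nf

lemma trace_sum_kronecker_proj_mul_one_add_swapM (v : ι → Fin d → ℂ)
    (hv : ∀ i, star (v i) ⬝ᵥ v i = 1) :
    trace ((∑ i, proj (v i) ⊗ₖ proj (v i)) * (1 + swapM d)) = (2 * Fintype.card ι : ℂ) := by
  simp only [mul_add, mul_one, trace_add, Finset.sum_mul, trace_sum, trace_kronecker,
    trace_kronecker_mul_swapM, proj_mul_proj_self (hv _), trace_proj, hv, Finset.sum_const,
    Finset.card_univ, nsmul_eq_mul]
  ring

end Frame

lemma sum_norm_dotProduct_pow_four_of_mub {d : ℕ} (ψ : Fin (d + 1) → Fin d → Fin d → ℂ)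
    (hOrth : ∀ θ x y, star (ψ θ x) ⬝ᵥ ψ θ y = if x = y then 1 else 0)
    (hMUB : ∀ θ θ', θ ≠ θ' → ∀ x y, ‖star (ψ θ x) ⬝ᵥ ψ θ' y‖ ^ 2 = 1 / (d : ℝ))
    (θ : Fin (d + 1)) (x : Fin d) :
    ∑ θ', ∑ y, ‖star (ψ θ x) ⬝ᵥ ψ θ' y‖ ^ 4 = 2 := by
  have hd : (d : ℝ) ≠ 0 := Nat.cast_ne_zero.2 x.pos.ne'
  have hsame : ∑ y, ‖star (ψ θ x) ⬝ᵥ ψ θ y‖ ^ 4 = 1 := by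
    simp [hOrth, apply_ite]
  have hother : ∀ θ' ≠ θ, ∑ y, ‖star (ψ θ x) ⬝ᵥ ψ θ' y‖ ^ 4 = 1 / d := by
    intro θ' h
    simp_rw [show 4 = 2 * 2 from rfl, pow_mul, hMUB θ θ' (Ne.symm h), Finset.sum_const,
      Finset.card_univ, Fintype.card_fin, nsmul_eq_mul]
    field_simp
  rw [Fintype.sum_eq_add_sum_compl θ, hsame,
    Finset.sum_congr rfl fun θ' h => hother θ' (by simpa using h)]
  rw [Finset.sum_const, Finset.card_compl, Finset.card_singleton, Fintype.card_fin,
    Nat.add_sub_cancel, nsmul_eq_mul]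
  field_simp
  ring

theorem stmt2_general (d : ℕ)
    (ψ : Fin (d + 1) → Fin d → Fin d → ℂ)
    (hOrth : ∀ θ x y, (∑ s, (starRingEnd ℂ) (ψ θ x s) * ψ θ y s) = if x = y then 1 else 0)
    (hMUB : ∀ θ θ', θ ≠ θ' → ∀ x y,
      (‖∑ s, (starRingEnd ℂ) (ψ θ x s) * ψ θ' y s‖) ^ 2 = 1 / (d : ℝ)) :
    ∑ θ : Fin (d + 1), ∑ x : Fin d, (proj (ψ θ x)) ⊗ₖ (proj (ψ θ x)) =
      (1 : Matrix (Fin d × Fin d) (Fin d × Fin d) ℂ) + swapM d := by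
  have hv : ∀ p, star (Function.uncurry ψ p) ⬝ᵥ Function.uncurry ψ p = 1 :=
    fun p => (hOrth p.1 p.2 p.2).trans (if_pos rfl)
  have hcard : (Fintype.card (Fin (d + 1) × Fin d) : ℂ) = (d + 1) * d := by simp
  rw [← Fintype.sum_prod_type' (fun θ x => proj (ψ θ x) ⊗ₖ proj (ψ θ x))]
  refine (isHermitian_sum_kronecker_proj (Function.uncurry ψ)).eq_of_trace_mul_self_eq_trace_mul
    (isHermitian_one.add isHermitian_swapM) ?_ ?_
  · rw [trace_sum_kronecker_proj_mul_self, trace_sum_kronecker_proj_mul_one_add_swapM _ hv,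
      hcard]
    simp only [Fintype.sum_prod_type, Function.uncurry_apply_pair,
      sum_norm_dotProduct_pow_four_of_mub ψ hOrth hMUB, Finset.sum_const, Finset.card_univ,
      Fintype.card_fin, nsmul_eq_mul]
    push_cast
    ring
  · rw [trace_one_add_swapM_mul_self, trace_sum_kronecker_proj_mul_one_add_swapM _ hv, hcard]
    ring

theorem stmt2 (d : ℕ) (hd : 1 ≤ d)
    (ψ : Fin (d + 1) → Fin d → Fin d → ℂ)
    (hOrth : ∀ θ x y, (∑ s, (starRingEnd ℂ) (ψ θ x s) * ψ θ y s) = if x = y then 1 else 0)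
    (hMUB : ∀ θ θ', θ ≠ θ' → ∀ x y,
      (‖∑ s, (starRingEnd ℂ) (ψ θ x s) * ψ θ' y s‖) ^ 2 = 1 / (d : ℝ)) :
    ∑ θ : Fin (d + 1), ∑ x : Fin d, (proj (ψ θ x)) ⊗ₖ (proj (ψ θ x)) =
      (1 : Matrix (Fin d × Fin d) (Fin d × Fin d) ℂ) + swapM d :=
  stmt2_general d ψ hOrth hMUB
end
end

section
/- Let {P_x : x = 1,...,d²} be a generalized SIM with efficiency η on a d-dimensional Hilbert space H_A (d ≥ 2), and let X̃ be any Hermitian operator on H_A ⊗ H_B. Then ∑_{x=1}^{d²} Tr_B[ (Tr_A[(P_x ⊗ I_B) X̃])² ] = l(η)·Tr_B[(Tr_A X̃)²] + r(η)·Tr[X̃²], where l(η) = (1 − dη)/(d² − 1) and r(η) = (d³η − 1)/(d(d² − 1)). -/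
/-
The Gram matrix `Tr (P x * P y)` of a generalized SIM is `(η - c) • 1 + c • J`, with `J` the
all-ones matrix and `c = simOverlap d η < η`, hence invertible, so the `d²` operators `P x`
form a basis of the `d × d` matrices. Checking on this basis
gives the conical 2-design identity in superoperator form,
`∑ x, Tr (P x * A) • P x = r • A + (l * Tr A) • 1`, with `r = η - c` and `l = c * d`.
Cutting `X` into the `d × d` blocks `X_{bb'} = X.submatrix (·, b) (·, b')`, the `(b, b')` entry
of `Tr_A ((P x ⊗ 1) * X)` is `Tr (P x * X_{bb'})`, so the left-hand side is
`∑ b b' x, Tr (P x * X_{bb'}) * Tr (P x * X_{b'b})`, and the 2-design identity turns it into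
`r * ∑ Tr (X_{bb'} * X_{b'b}) + l * ∑ Tr X_{bb'} * Tr X_{b'b}`,
which is `r * Tr (X * X) + l * Tr_B ((Tr_A X)²)`.
-/

open Matrix Kronecker BigOperators Complex
open scoped ComplexOrder

noncomputable section

/-- Partial trace over the `A` factor. -/
def ptraceA (dA dB : ℕ) (X : Matrix (Fin dA × Fin dB) (Fin dA × Fin dB) ℂ) :
    Matrix (Fin dB) (Fin dB) ℂ :=
  fun b b' => ∑ a, X (a, b) (a, b')

open Finset

theorem Finset.sum_ite_eq_smul {R M ι : Type*} [Ring R] [AddCommGroup M] [Module R M]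
    [Fintype ι] [DecidableEq ι] (α β : R) (v : ι → M) (y : ι) :
    ∑ x, (if x = y then α else β) • v x = (α - β) • v y + β • ∑ x, v x := by
  calc ∑ x, (if x = y then α else β) • v x
      = ∑ x, ((if x = y then α - β else 0) • v x + β • v x) :=
        sum_congr rfl fun x _ => by split_ifs <;> simp [sub_smul]
    _ = (α - β) • v y + β • ∑ x, v x := by simp [sum_add_distrib, smul_sum]

namespace Matrix

variable {K n ι : Type*} [Field K] [Fintype n] [Fintype ι] [DecidableEq ι]
  {P : ι → Matrix n n K} {α β : K}

theorem trace_mul_sum_smul_of_gram (hGram : ∀ x y, (P x * P y).trace = if x = y then α else β)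
    (g : ι → K) (y : ι) :
    (P y * ∑ x, g x • P x).trace = (α - β) * g y + β * ∑ x, g x := by
  calc (P y * ∑ x, g x • P x).trace = ∑ x, (if x = y then α else β) • g x := by
        simp only [mul_sum, Matrix.mul_smul, trace_sum, trace_smul, hGram y, eq_comm (a := y),
          smul_eq_mul, mul_comm]
    _ = (α - β) * g y + β * ∑ x, g x := sum_ite_eq_smul α β g y

theorem trace_eq_of_gram [DecidableEq n]
    (hGram : ∀ x y, (P x * P y).trace = if x = y then α else β) (hP : ∑ x, P x = 1) (y : ι) :
    (P y).trace = α - β + Fintype.card ι * β := by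
  simpa [hP, mul_comm] using trace_mul_sum_smul_of_gram hGram (fun _ => 1) y

theorem card_mul_trace_of_gram [DecidableEq n]
    (hGram : ∀ x y, (P x * P y).trace = if x = y then α else β) (hP : ∑ x, P x = 1) :
    Fintype.card ι * (α - β + Fintype.card ι * β) = Fintype.card n := by
  simpa [trace_eq_of_gram hGram hP, hP, mul_add] using (trace_sum univ P).symm

theorem linearIndependent_of_gram (hGram : ∀ x y, (P x * P y).trace = if x = y then α else β)
    (hαβ : α ≠ β) (hτ : α - β + Fintype.card ι * β ≠ 0) : LinearIndependent K P := by
  rw [Fintype.linearIndependent_iff]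
  intro g hg
  have hy (y : ι) : (α - β) * g y + β * ∑ x, g x = 0 := by
    rw [← trace_mul_sum_smul_of_gram hGram, hg, mul_zero, trace_zero]
  have hsum : ∑ x, g x = 0 := by
    have h := sum_congr rfl fun y (_ : y ∈ univ) => hy y
    rw [sum_add_distrib, ← mul_sum, sum_const, card_univ, nsmul_eq_mul, sum_const_zero] at h
    have : (α - β + Fintype.card ι * β) * ∑ x, g x = 0 := by linear_combination h
    exact (mul_eq_zero.mp this).resolve_left hτ
  intro y
  simpa [hsum, sub_ne_zero.mpr hαβ] using hy y

theorem sum_trace_mul_smul_of_gram [CharZero K] [DecidableEq n] [Nonempty n]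
    (hGram : ∀ x y, (P x * P y).trace = if x = y then α else β) (hP : ∑ x, P x = 1)
    (hαβ : α ≠ β) (hcard : Fintype.card ι = Fintype.card n ^ 2) (A : Matrix n n K) :
    ∑ x, (P x * A).trace • P x = (α - β) • A + (β * Fintype.card n * A.trace) • 1 := by
  have hn : (Fintype.card n : K) ≠ 0 := Nat.cast_ne_zero.mpr Fintype.card_ne_zero
  have htrace : α - β + Fintype.card ι * β = (Fintype.card n : K)⁻¹ := by
    have h := card_mul_trace_of_gram hGram hP
    rw [hcard, Nat.cast_pow] at h ⊢
    refine eq_inv_of_mul_eq_one_right (mul_left_cancel₀ hn ?_)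
    linear_combination h
  have hli := linearIndependent_of_gram hGram hαβ (htrace ▸ inv_ne_zero hn)
  have : Nonempty ι := Fintype.card_pos_iff.mp (by rw [hcard]; positivity)
  let b := basisOfLinearIndependentOfCardEqFinrank hli (by simp [Module.finrank_matrix, hcard, sq])
  have hb : ⇑b = P := coe_basisOfLinearIndependentOfCardEqFinrank _ _
  let L : Matrix n n K →ₗ[K] Matrix n n K :=
    ∑ x, LinearMap.toSpanSingleton K _ (P x) ∘ₗ traceLinearMap n K K ∘ₗ
      LinearMap.mulLeft K (P x)
  let R : Matrix n n K →ₗ[K] Matrix n n K :=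
    (α - β) • LinearMap.id +
      LinearMap.toSpanSingleton K _ 1 ∘ₗ ((β * (Fintype.card n : K)) • traceLinearMap n K K)
  have hLR : L = R := by
    refine b.ext fun y => ?_
    simp only [L, R, hb, LinearMap.sum_apply, LinearMap.comp_apply, LinearMap.add_apply,
      LinearMap.smul_apply, LinearMap.id_apply, LinearMap.mulLeft_apply, traceLinearMap_apply,
      LinearMap.toSpanSingleton_apply, smul_eq_mul, hGram, sum_ite_eq_smul, hP,
      trace_eq_of_gram hGram hP, htrace, mul_assoc, mul_inv_cancel₀ hn, mul_one]
  simpa [L, R, mul_assoc] using LinearMap.congr_fun hLR A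

theorem sum_trace_mul_mul_trace_mul_of_gram [CharZero K] [DecidableEq n] [Nonempty n]
    (hGram : ∀ x y, (P x * P y).trace = if x = y then α else β) (hP : ∑ x, P x = 1)
    (hαβ : α ≠ β) (hcard : Fintype.card ι = Fintype.card n ^ 2) (A B : Matrix n n K) :
    ∑ x, (P x * A).trace * (P x * B).trace =
      (α - β) * (A * B).trace + β * Fintype.card n * (A.trace * B.trace) := by
  calc ∑ x, (P x * A).trace * (P x * B).trace = ((∑ x, (P x * A).trace • P x) * B).trace := by
        simp only [sum_mul, trace_sum, smul_mul, trace_smul, smul_eq_mul]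
    _ = (α - β) * (A * B).trace + β * Fintype.card n * (A.trace * B.trace) := by
        rw [sum_trace_mul_smul_of_gram hGram hP hαβ hcard]
        simp only [add_mul, smul_mul, Matrix.one_mul, trace_add, trace_smul, smul_eq_mul]
        ring

end Matrix

/-- The common value of `Tr (P x * P y)`, `x ≠ y`, for a generalized SIM of efficiency `η`. -/
def simOverlap (d η : ℝ) : ℝ := (1 - η * d) / (d * (d ^ 2 - 1))

theorem simOverlap_lt {d η : ℝ} (hd : 1 < d) (hη : 1 / d ^ 3 < η) : simOverlap d η < η := by
  have hη' : 1 < η * d ^ 3 := (div_lt_iff₀ (by positivity)).mp hη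
  rw [simOverlap, div_lt_iff₀ (by nlinarith)]
  nlinarith

theorem sub_simOverlap {d : ℝ} (η : ℝ) (hd : d * (d ^ 2 - 1) ≠ 0) :
    η - simOverlap d η = (d ^ 3 * η - 1) / (d * (d ^ 2 - 1)) := by
  rw [simOverlap, eq_div_iff hd, sub_mul, div_mul_cancel₀ _ hd]
  ring

theorem simOverlap_mul {d : ℝ} (η : ℝ) (hd : d * (d ^ 2 - 1) ≠ 0) :
    simOverlap d η * d = (1 - d * η) / (d ^ 2 - 1) := by
  rw [simOverlap, div_mul_eq_mul_div, mul_comm d, mul_div_mul_right _ _ (left_ne_zero_of_mul hd),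
    mul_comm η]

theorem ptraceA_apply (dA dB : ℕ) (X : Matrix (Fin dA × Fin dB) (Fin dA × Fin dB) ℂ)
    (b b' : Fin dB) :
    ptraceA dA dB X b b' = (X.submatrix (·, b) (·, b')).trace := rfl

theorem ptraceA_kronecker_one_mul_apply (dA dB : ℕ) (P : Matrix (Fin dA) (Fin dA) ℂ)
    (X : Matrix (Fin dA × Fin dB) (Fin dA × Fin dB) ℂ) (b b' : Fin dB) :
    ptraceA dA dB ((P ⊗ₖ (1 : Matrix (Fin dB) (Fin dB) ℂ)) * X) b b' =
      (P * X.submatrix (·, b) (·, b')).trace := by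
  simp [ptraceA, trace, mul_apply, Fintype.sum_prod_type, one_apply]

theorem trace_ptraceA_kronecker_one_mul_mul (dA dB : ℕ) (P Q : Matrix (Fin dA) (Fin dA) ℂ)
    (X : Matrix (Fin dA × Fin dB) (Fin dA × Fin dB) ℂ) :
    (ptraceA dA dB ((P ⊗ₖ (1 : Matrix (Fin dB) (Fin dB) ℂ)) * X) *
        ptraceA dA dB ((Q ⊗ₖ (1 : Matrix (Fin dB) (Fin dB) ℂ)) * X)).trace =
      ∑ b, ∑ b',
        (P * X.submatrix (·, b) (·, b')).trace * (Q * X.submatrix (·, b') (·, b)).trace := by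
  rw [trace]
  simp only [diag_apply, mul_apply, ptraceA_kronecker_one_mul_apply]

theorem trace_mul_self_eq_sum_trace_submatrix {R m n : Type*} [NonUnitalNonAssocSemiring R]
    [Fintype m] [Fintype n] (X : Matrix (m × n) (m × n) R) :
    (X * X).trace =
      ∑ b, ∑ b', (X.submatrix (·, b) (·, b') * X.submatrix (·, b') (·, b)).trace := by
  simp only [trace, diag_apply, mul_apply, submatrix_apply, Fintype.sum_prod_type_right]
  exact sum_congr rfl fun _ _ => sum_comm

theorem trace_ptraceA_mul_self (dA dB : ℕ)
    (X : Matrix (Fin dA × Fin dB) (Fin dA × Fin dB) ℂ) :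
    (ptraceA dA dB X * ptraceA dA dB X).trace =
      ∑ b, ∑ b',
        (X.submatrix (·, b) (·, b')).trace * (X.submatrix (·, b') (·, b)).trace := by
  simp only [trace, mul_apply, diag_apply, ptraceA_apply]

theorem stmt8_general (dA dB : ℕ) (hd : 2 ≤ dA) (η : ℝ)
    (hη1 : 1 / (dA : ℝ) ^ 3 < η)
    (P : Fin (dA ^ 2) → Matrix (Fin dA) (Fin dA) ℂ)
    (hPOVM : ∑ x, P x = 1)
    (hEff : ∀ x, (P x * P x).trace = (η : ℂ))
    (hSym : ∀ x y, x ≠ y → (P x * P y).trace =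
      (((1 - η * dA) / ((dA : ℝ) * ((dA : ℝ) ^ 2 - 1)) : ℝ) : ℂ))
    (X : Matrix (Fin dA × Fin dB) (Fin dA × Fin dB) ℂ) :
    ∑ x : Fin (dA ^ 2),
        (ptraceA dA dB (((P x) ⊗ₖ (1 : Matrix (Fin dB) (Fin dB) ℂ)) * X) *
          ptraceA dA dB (((P x) ⊗ₖ (1 : Matrix (Fin dB) (Fin dB) ℂ)) * X)).trace =
      (((1 - (dA : ℝ) * η) / ((dA : ℝ) ^ 2 - 1) : ℝ) : ℂ) *
          (ptraceA dA dB X * ptraceA dA dB X).trace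
        + ((((dA : ℝ) ^ 3 * η - 1) / ((dA : ℝ) * ((dA : ℝ) ^ 2 - 1)) : ℝ) : ℂ) *
          (X * X).trace := by
  have hd' : (1 : ℝ) < dA := by exact_mod_cast hd
  have hD : (dA : ℝ) * ((dA : ℝ) ^ 2 - 1) ≠ 0 := mul_ne_zero (by positivity) (by nlinarith)
  have hGram (x y) :
      (P x * P y).trace = if x = y then (η : ℂ) else (simOverlap dA η : ℂ) := by
    split_ifs with hxy
    · exact hxy ▸ hEff x
    · exact hSym x y hxy
  have hηc : (η : ℂ) ≠ simOverlap dA η :=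
    Complex.ofReal_injective.ne (simOverlap_lt hd' hη1).ne'
  have : Nonempty (Fin dA) := ⟨⟨0, by omega⟩⟩
  have hcard : Fintype.card (Fin (dA ^ 2)) = Fintype.card (Fin dA) ^ 2 := by simp
  calc _ = ∑ b, ∑ b', ∑ x, (P x * X.submatrix (·, b) (·, b')).trace *
        (P x * X.submatrix (·, b') (·, b)).trace := by
        simp only [trace_ptraceA_kronecker_one_mul_mul]
        rw [sum_comm]
        exact sum_congr rfl fun _ _ => sum_comm
    _ = _ := by
        simp only [sum_trace_mul_mul_trace_mul_of_gram hGram hPOVM hηc hcard,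
          trace_mul_self_eq_sum_trace_submatrix, trace_ptraceA_mul_self, sum_add_distrib,
          ← mul_sum, Fintype.card_fin, ← sub_simOverlap η hD, ← simOverlap_mul η hD]
        push_cast
        ring

theorem stmt8 (dA dB : ℕ) (hd : 2 ≤ dA) (η : ℝ)
    (hη1 : 1 / (dA : ℝ) ^ 3 < η) (hη2 : η ≤ 1 / (dA : ℝ) ^ 2)
    (P : Fin (dA ^ 2) → Matrix (Fin dA) (Fin dA) ℂ)
    (hPos : ∀ x, (P x).PosSemidef)
    (hPOVM : ∑ x, P x = 1)
    (hEff : ∀ x, (P x * P x).trace = (η : ℂ))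
    (hSym : ∀ x y, x ≠ y → (P x * P y).trace =
      (((1 - η * dA) / ((dA : ℝ) * ((dA : ℝ) ^ 2 - 1)) : ℝ) : ℂ))
    (X : Matrix (Fin dA × Fin dB) (Fin dA × Fin dB) ℂ) (hX : X.IsHermitian) :
    ∑ x : Fin (dA ^ 2),
        (ptraceA dA dB (((P x) ⊗ₖ (1 : Matrix (Fin dB) (Fin dB) ℂ)) * X) *
          ptraceA dA dB (((P x) ⊗ₖ (1 : Matrix (Fin dB) (Fin dB) ℂ)) * X)).trace =
      (((1 - (dA : ℝ) * η) / ((dA : ℝ) ^ 2 - 1) : ℝ) : ℂ) *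
          (ptraceA dA dB X * ptraceA dA dB X).trace
        + ((((dA : ℝ) ^ 3 * η - 1) / ((dA : ℝ) * ((dA : ℝ) ^ 2 - 1)) : ℝ) : ℂ) *
          (X * X).trace :=
  stmt8_general dA dB hd η hη1 P hPOVM hEff hSym X
end
end

section
/- Let ρ be a density operator on a d-dimensional Hilbert space and {P_x : x = 1,...,d²} a generalized SIM with efficiency η (d ≥ 2). Then the collision entropy of the outcome distribution p(x) = Tr[P_x ρ] satisfies the equality H₂(p) = −log ∑_x p(x)² = log[ d(d²−1) / ((d³η − 1)Tr[ρ²] + (1 − dη)d ) ]. Equivalently, ∑_{x=1}^{d²} (Tr[P_x ρ])² = ( (d³η − 1)Tr[ρ²] + (1 − dη)d ) / (d(d² − 1)). -/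
open Matrix Kronecker BigOperators Complex
open scoped ComplexOrder

noncomputable section

private lemma aux_sum_ite {n : ℕ} (v : Fin n → ℂ) (a bc : ℂ) (z : Fin n) :
    ∑ x, v x * (if z = x then a else bc) = (a - bc) * v z + bc * ∑ x, v x := by
  have h : ∀ x, v x * (if z = x then a else bc)
      = (if z = x then v x * (a - bc) else 0) + v x * bc := by
    intro x; by_cases hx : z = x <;> simp [hx] <;> ring
  simp_rw [h, Finset.sum_add_distrib, Finset.sum_ite_eq, Finset.mem_univ, if_true,
    ← Finset.sum_mul]
  ring

theorem stmt9 (d : ℕ) (hd : 2 ≤ d) (η : ℝ)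
    (hη1 : 1 / (d : ℝ) ^ 3 < η) (hη2 : η ≤ 1 / (d : ℝ) ^ 2)
    (P : Fin (d ^ 2) → Matrix (Fin d) (Fin d) ℂ)
    (hPos : ∀ x, (P x).PosSemidef)
    (hPOVM : ∑ x, P x = 1)
    (hEff : ∀ x, (P x * P x).trace = (η : ℂ))
    (hSym : ∀ x y, x ≠ y → (P x * P y).trace =
      (((1 - η * d) / ((d : ℝ) * ((d : ℝ) ^ 2 - 1)) : ℝ) : ℂ))
    (ρ : Matrix (Fin d) (Fin d) ℂ) (hρ : ρ.PosSemidef) (hρtr : ρ.trace = 1) :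
    (∑ x : Fin (d ^ 2), ((P x * ρ).trace) ^ 2 =
      (((d : ℂ) ^ 3 * (η : ℂ) - 1) * (ρ * ρ).trace + (1 - (d : ℂ) * (η : ℂ)) * (d : ℂ)) /
        ((d : ℂ) * ((d : ℂ) ^ 2 - 1))) ∧
    (-Real.logb 2 (∑ x : Fin (d ^ 2), ((P x * ρ).trace.re) ^ 2) =
      Real.logb 2 ((d : ℝ) * ((d : ℝ) ^ 2 - 1) /
        (((d : ℝ) ^ 3 * η - 1) * (ρ * ρ).trace.re + (1 - (d : ℝ) * η) * (d : ℝ)))) := by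
  have hdR : (2 : ℝ) ≤ (d : ℝ) := by exact_mod_cast hd
  have hdR0 : (0 : ℝ) < (d : ℝ) := by linarith
  have hdsqR : (0 : ℝ) < (d : ℝ) ^ 2 - 1 := by nlinarith
  have hdC : (d : ℂ) ≠ 0 := by
    exact_mod_cast (Complex.ofReal_ne_zero.mpr (ne_of_gt hdR0))
  have hdsqC : ((d : ℂ) ^ 2 - 1) ≠ 0 := by
    have : (((d : ℝ) ^ 2 - 1 : ℝ) : ℂ) ≠ 0 := Complex.ofReal_ne_zero.mpr (ne_of_gt hdsqR)
    push_cast at this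
    exact this
  have hden : ((d : ℂ) * ((d : ℂ) ^ 2 - 1)) ≠ 0 := mul_ne_zero hdC hdsqC
  set c : ℂ := (1 - (η : ℂ) * (d : ℂ)) / ((d : ℂ) * ((d : ℂ) ^ 2 - 1)) with hc
  have hSym' : ∀ x y : Fin (d ^ 2), x ≠ y → (P x * P y).trace = c := by
    intro x y hxy
    rw [hSym x y hxy, hc]
    push_cast
    ring
  -- key scalar identity
  have hnum : (0 : ℝ) < η * (d : ℝ) ^ 3 - 1 := by
    have h3 : (0 : ℝ) < (d : ℝ) ^ 3 := by positivity
    have := (div_lt_iff₀ h3).mp hη1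
    nlinarith
  have hE : (η : ℂ) - c ≠ 0 := by
    have hEeq : (η : ℂ) - c = ((η : ℂ) * (d : ℂ) ^ 3 - 1) / ((d : ℂ) * ((d : ℂ) ^ 2 - 1)) := by
      rw [hc]; field_simp; ring
    rw [hEeq]
    apply div_ne_zero _ hden
    have : (((η * (d : ℝ) ^ 3 - 1 : ℝ)) : ℂ) ≠ 0 := Complex.ofReal_ne_zero.mpr (ne_of_gt hnum)
    push_cast at this
    intro h
    apply this
    linear_combination h
  have hKey : (η : ℂ) + ((d : ℂ) ^ 2 - 1) * c = 1 / (d : ℂ) := by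
    rw [hc]; field_simp; ring
  -- Gram matrix
  have hG : ∀ y x : Fin (d ^ 2), (P y * P x).trace = if y = x then (η : ℂ) else c := by
    intro y x
    by_cases h : y = x
    · subst h; simp [hEff y]
    · simp [h, hSym' y x h]
  -- trace of each P x
  have hcastd2 : ((d ^ 2 : ℕ) : ℂ) = (d : ℂ) ^ 2 := by push_cast; ring
  have hTrP : ∀ x, (P x).trace = 1 / (d : ℂ) := by
    intro x
    have h1 : (P x).trace = ∑ y, (P x * P y).trace := by
      rw [← Matrix.trace_sum]
      congr 1
      rw [← Matrix.mul_sum, hPOVM, mul_one]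
    rw [h1]
    have h2 : ∑ y, (P x * P y).trace = ∑ y, (1 : ℂ) * (if x = y then (η : ℂ) else c) := by
      apply Finset.sum_congr rfl
      intro y _
      rw [hG x y, one_mul]
    rw [h2, aux_sum_ite (fun _ => (1 : ℂ)) (η : ℂ) c x]
    simp only [Finset.sum_const, Finset.card_univ, Fintype.card_fin, nsmul_eq_mul, mul_one]
    rw [← hKey, hcastd2]
    ring
  -- linear independence
  have hli : LinearIndependent ℂ P := by
    rw [Fintype.linearIndependent_iff]
    intro v hv
    have key : ∀ z, ((η : ℂ) - c) * v z + c * ∑ x, v x = 0 := by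
      intro z
      have h0 : (P z * (∑ x, v x • P x)).trace = 0 := by rw [hv, Matrix.mul_zero, Matrix.trace_zero]
      rw [Matrix.mul_sum] at h0
      rw [Matrix.trace_sum] at h0
      have h1 : ∀ x, (P z * (v x • P x)).trace = v x * (if z = x then (η : ℂ) else c) := by
        intro x
        rw [Matrix.mul_smul, Matrix.trace_smul, smul_eq_mul, hG z x]
      rw [Finset.sum_congr rfl (fun x _ => h1 x), aux_sum_ite v (η : ℂ) c z] at h0
      exact h0
    have hsum0 : (∑ x, v x) = 0 := by
      have h2 : ∑ z : Fin (d ^ 2), (((η : ℂ) - c) * v z + c * ∑ x, v x) = 0 := by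
        simp [key]
      rw [Finset.sum_add_distrib, ← Finset.mul_sum] at h2
      simp only [Finset.sum_const, Finset.card_univ, Fintype.card_fin, nsmul_eq_mul] at h2
      rw [hcastd2] at h2
      have h3 : (((η : ℂ) - c) + (d : ℂ) ^ 2 * c) * (∑ x, v x) = 0 := by
        linear_combination h2
      have h4 : ((η : ℂ) - c) + (d : ℂ) ^ 2 * c ≠ 0 := by
        have : ((η : ℂ) - c) + (d : ℂ) ^ 2 * c = 1 / (d : ℂ) := by rw [← hKey]; ring
        rw [this]
        exact one_div_ne_zero hdC
      rcases mul_eq_zero.mp h3 with h | h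
      · exact absurd h h4
      · exact h
    intro z
    have := key z
    rw [hsum0, mul_zero, add_zero] at this
    rcases mul_eq_zero.mp this with h | h
    · exact absurd h hE
    · exact h
  -- basis
  have hcard : Fintype.card (Fin (d ^ 2)) = Module.finrank ℂ (Matrix (Fin d) (Fin d) ℂ) := by
    rw [Module.finrank_matrix]
    simp [pow_two]
  have hne : Nonempty (Fin (d ^ 2)) := by
    refine ⟨⟨0, ?_⟩⟩
    positivity
  let B := basisOfLinearIndependentOfCardEqFinrank hli hcard
  set b : Fin (d ^ 2) → ℂ := fun x => B.repr ρ x with hb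
  have hρeq : ∑ x, b x • P x = ρ := by
    have := B.sum_repr ρ
    rw [← this]
    apply Finset.sum_congr rfl
    intro x _
    congr 1
    exact (congrFun (coe_basisOfLinearIndependentOfCardEqFinrank hli hcard) x).symm
  -- sum of b
  have hS : ∑ x, b x = (d : ℂ) := by
    have h1 : ρ.trace = ∑ x, b x * (1 / (d : ℂ)) := by
      rw [← hρeq, Matrix.trace_sum]
      apply Finset.sum_congr rfl
      intro x _
      rw [Matrix.trace_smul, smul_eq_mul, hTrP x]
    rw [hρtr, ← Finset.sum_mul] at h1
    field_simp at h1
    linear_combination -h1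
  -- probabilities
  have hp : ∀ y, (P y * ρ).trace = ((η : ℂ) - c) * b y + c * (d : ℂ) := by
    intro y
    have h1 : (P y * ρ).trace = ∑ x, b x * (if y = x then (η : ℂ) else c) := by
      rw [← hρeq, Matrix.mul_sum, Matrix.trace_sum]
      apply Finset.sum_congr rfl
      intro x _
      rw [Matrix.mul_smul, Matrix.trace_smul, smul_eq_mul, hG y x]
    rw [h1, aux_sum_ite b (η : ℂ) c y, hS]
  -- purity
  set Q : ℂ := ∑ x, b x ^ 2 with hQ
  have hT : (ρ * ρ).trace = ((η : ℂ) - c) * Q + c * (d : ℂ) ^ 2 := by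
    have h1 : (ρ * ρ).trace = ∑ x, b x * (P x * ρ).trace := by
      nth_rewrite 1 [← hρeq]
      rw [Matrix.sum_mul, Matrix.trace_sum]
      apply Finset.sum_congr rfl
      intro x _
      rw [Matrix.smul_mul, Matrix.trace_smul, smul_eq_mul]
    rw [h1]
    have h2 : ∀ x : Fin (d ^ 2), b x * (P x * ρ).trace
        = ((η : ℂ) - c) * b x ^ 2 + c * (d : ℂ) * b x := by
      intro x; rw [hp x]; ring
    rw [Finset.sum_congr rfl (fun x _ => h2 x), Finset.sum_add_distrib, ← Finset.mul_sum,
      ← Finset.mul_sum, hS, ← hQ]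
    ring
  -- sum of squared probabilities
  have hsum : ∑ x : Fin (d ^ 2), ((P x * ρ).trace) ^ 2
      = ((η : ℂ) - c) ^ 2 * Q + 2 * ((η : ℂ) - c) * c * (d : ℂ) ^ 2
        + c ^ 2 * (d : ℂ) ^ 4 := by
    have h2 : ∀ x : Fin (d ^ 2), ((P x * ρ).trace) ^ 2
        = ((η : ℂ) - c) ^ 2 * b x ^ 2 + 2 * ((η : ℂ) - c) * c * (d : ℂ) * b x
          + c ^ 2 * (d : ℂ) ^ 2 := by
      intro x; rw [hp x]; ring
    rw [Finset.sum_congr rfl (fun x _ => h2 x), Finset.sum_add_distrib, Finset.sum_add_distrib,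
      ← Finset.mul_sum, ← Finset.mul_sum, hS, ← hQ]
    simp only [Finset.sum_const, Finset.card_univ, Fintype.card_fin, nsmul_eq_mul, hcastd2]
    ring
  -- part 1
  have part1 : ∑ x : Fin (d ^ 2), ((P x * ρ).trace) ^ 2 =
      (((d : ℂ) ^ 3 * (η : ℂ) - 1) * (ρ * ρ).trace + (1 - (d : ℂ) * (η : ℂ)) * (d : ℂ)) /
        ((d : ℂ) * ((d : ℂ) ^ 2 - 1)) := by
    have hstepA : ∑ x : Fin (d ^ 2), ((P x * ρ).trace) ^ 2
        = ((η : ℂ) - c) * (ρ * ρ).trace + c * (d : ℂ) := by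
      have hKey' : (d : ℂ) * (((η : ℂ) - c) + c * (d : ℂ) ^ 2) = 1 := by
        have h : ((η : ℂ) - c) + c * (d : ℂ) ^ 2 = 1 / (d : ℂ) := by rw [← hKey]; ring
        rw [h]
        field_simp
      linear_combination hsum - ((η : ℂ) - c) * hT + c * (d : ℂ) * hKey'
    rw [hstepA, hc]
    field_simp
    ring
  refine ⟨part1, ?_⟩
  -- realness
  have hHerm : ∀ (A B : Matrix (Fin d) (Fin d) ℂ), A.IsHermitian → B.IsHermitian →
      ((A * B).trace) = (((A * B).trace.re : ℝ) : ℂ) := by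
    intro A B hA hB
    have hstar : star ((A * B).trace) = (A * B).trace := by
      rw [← Matrix.trace_conjTranspose, Matrix.conjTranspose_mul, hA.eq, hB.eq,
        Matrix.trace_mul_comm]
    exact (Complex.conj_eq_iff_re.mp hstar).symm
  have hreal : ∀ x, ((P x * ρ).trace) = (((P x * ρ).trace.re : ℝ) : ℂ) :=
    fun x => hHerm _ _ (hPos x).isHermitian hρ.isHermitian
  have hTreal : ((ρ * ρ).trace) = (((ρ * ρ).trace.re : ℝ) : ℂ) :=
    hHerm _ _ hρ.isHermitian hρ.isHermitian
  have hXC : ((∑ x : Fin (d ^ 2), ((P x * ρ).trace.re) ^ 2 : ℝ) : ℂ)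
      = (((((d : ℝ) ^ 3 * η - 1) * (ρ * ρ).trace.re + (1 - (d : ℝ) * η) * (d : ℝ)) /
          ((d : ℝ) * ((d : ℝ) ^ 2 - 1)) : ℝ) : ℂ) := by
    push_cast
    calc ∑ x : Fin (d ^ 2), (((P x * ρ).trace.re : ℝ) : ℂ) ^ 2
        = ∑ x : Fin (d ^ 2), ((P x * ρ).trace) ^ 2 := by
          apply Finset.sum_congr rfl
          intro x _
          rw [← hreal x]
      _ = _ := by
          rw [part1]
          conv_lhs => rw [hTreal]
  have hXR := Complex.ofReal_inj.mp hXC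
  rw [hXR, ← inv_div, Real.logb_inv, neg_neg]
end
end
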